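/- arXiv:2209.06908 — 2 statements merged into one kernel-verified Lean document; each statement's English description precedes it below -/
import Mathlib

section
/- Let N ≥ 3, f ∈ C¹(ℝ,ℝ), F(s) = ∫₀ˢ f, H(s) = f(s)s − 2F(s), and assume s ↦ H(s)/|s|^{2+4/N} is strictly increasing on (0,∞), strictly decreasing on (−∞,0), with limit 0 at 0. Then for any s ∈ ℝ and any t₀ ∈ (0,1], the pointwise inequality ((1−t₀²)/2)·(N/2)·H(s) + t₀^{−N}F(t₀^{N/2}s) − F(s) ≥ 0 holds; equivalently, ∫_{t₀}^{1} (N/2)·t·|s|^{2+4/N}·[H(s)/|s|^{2+4/N} − H(t^{N/2}s)/|t^{N/2}s|^{2+4/N}] dt ≥ 0 and equals the left-hand side. -/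
open Real Set Filter

/-!
The derivative of `t ↦ t ^ (-a) * F (t ^ (a / 2) * s)` is
`a / 2 * t ^ (-a - 1) * H (t ^ (a / 2) * s)`, and
`|t ^ (a / 2) * s| ^ (2 + 4 / a) = t ^ (a + 2) * |s| ^ (2 + 4 / a)`, so the integrand is
`a / 2 * t * H s` minus this derivative and the identity is the fundamental theorem of calculus on
`[t₀, 1]`. The integrand is nonnegative because for `0 < t ≤ 1` the point `t ^ (a / 2) * s` lies
between `0` and `s`, where `H s / |s| ^ (2 + 4 / a)` increases with `|s|`.
-/

theorem pos_of_mem_uIcc {a b t : ℝ} (ha : 0 < a) (hb : 0 < b) (ht : t ∈ uIcc a b) : 0 < t :=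
  (lt_min ha hb).trans_le ht.1

section Dilation

variable {f F H : ℝ → ℝ} {a : ℝ}

theorem hasDerivAt_rpow_neg_mul_comp_rpow_mul (hFd : ∀ x, HasDerivAt F (f x) x)
    (hH : ∀ s, H s = f s * s - 2 * F s) (s : ℝ) {t : ℝ} (ht : 0 < t) :
    HasDerivAt (fun t => t ^ (-a) * F (t ^ (a / 2) * s))
      (a / 2 * t ^ (-a - 1) * H (t ^ (a / 2) * s)) t := by
  have hpow : HasDerivAt (fun t : ℝ => t ^ (a / 2) * s) (a / 2 * t ^ (a / 2 - 1) * s) t :=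
    (hasDerivAt_rpow_const (Or.inl ht.ne')).mul_const s
  refine ((hasDerivAt_rpow_const (Or.inl ht.ne')).mul
    ((hFd _).comp t hpow)).congr_deriv ?_
  have hexp : t ^ (-a) * t ^ (a / 2 - 1) = t ^ (-a - 1) * t ^ (a / 2) := by
    rw [← rpow_add ht, ← rpow_add ht]
    ring_nf
  rw [Function.comp_apply, hH]
  linear_combination a / 2 * s * f (t ^ (a / 2) * s) * hexp

theorem intervalIntegrable_rpow_neg_sub_one_mul_comp_rpow_mul (hHc : Continuous H) (s : ℝ)
    {t₀ : ℝ} (ht₀ : 0 < t₀) :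
    IntervalIntegrable (fun t => a / 2 * t ^ (-a - 1) * H (t ^ (a / 2) * s))
      MeasureTheory.volume t₀ 1 := by
  refine ContinuousOn.intervalIntegrable fun t ht => ContinuousAt.continuousWithinAt ?_
  have ht0 : t ≠ 0 := (pos_of_mem_uIcc ht₀ one_pos ht).ne'
  exact (continuousAt_const.mul (continuousAt_rpow_const _ _ (Or.inl ht0))).mul
    (hHc.continuousAt.comp ((continuousAt_rpow_const _ _ (Or.inl ht0)).mul continuousAt_const))

theorem integral_rpow_neg_sub_one_mul_comp_rpow_mul (hFd : ∀ x, HasDerivAt F (f x) x)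
    (hH : ∀ s, H s = f s * s - 2 * F s) (hHc : Continuous H) (s : ℝ) {t₀ : ℝ}
    (ht₀ : 0 < t₀) :
    ∫ t in t₀..1, a / 2 * t ^ (-a - 1) * H (t ^ (a / 2) * s) =
      F s - t₀ ^ (-a) * F (t₀ ^ (a / 2) * s) := by
  rw [intervalIntegral.integral_eq_sub_of_hasDerivAt
    (fun t ht => hasDerivAt_rpow_neg_mul_comp_rpow_mul hFd hH s (pos_of_mem_uIcc ht₀ one_pos ht))
    (intervalIntegrable_rpow_neg_sub_one_mul_comp_rpow_mul hHc s ht₀)]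
  simp only [one_rpow, one_mul]

theorem abs_rpow_half_mul_rpow (ha : a ≠ 0) (s : ℝ) {t : ℝ} (ht : 0 ≤ t) :
    |t ^ (a / 2) * s| ^ (2 + 4 / a) = t ^ (a + 2) * |s| ^ (2 + 4 / a) := by
  have hexp : a / 2 * (2 + 4 / a) = a + 2 := by
    field_simp
    ring
  rw [abs_mul, abs_of_nonneg (rpow_nonneg ht _), mul_rpow (rpow_nonneg ht _) (abs_nonneg s),
    ← rpow_mul ht, hexp]

theorem mul_ratio_sub_ratio_eq (ha : 0 < a) (hH0 : H 0 = 0) (s : ℝ) {t : ℝ} (ht : 0 < t) :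
    a / 2 * t * |s| ^ (2 + 4 / a) *
        (H s / |s| ^ (2 + 4 / a) - H (t ^ (a / 2) * s) / |t ^ (a / 2) * s| ^ (2 + 4 / a)) =
      a / 2 * t * H s - a / 2 * t ^ (-a - 1) * H (t ^ (a / 2) * s) := by
  rcases eq_or_ne s 0 with rfl | hs
  · simp [hH0, zero_rpow (by positivity : (2 : ℝ) + 4 / a ≠ 0)]
  have hA : 0 < |s| ^ (2 + 4 / a) := rpow_pos_of_pos (abs_pos.mpr hs) _
  have hT : 0 < t ^ (a + 2) := rpow_pos_of_pos ht _
  have hpow : t ^ (-a - 1) = t / t ^ (a + 2) := by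
    rw [eq_div_iff hT.ne', ← rpow_add ht, show -a - 1 + (a + 2) = 1 by ring, rpow_one]
  rw [abs_rpow_half_mul_rpow ha.ne' s ht.le, hpow]
  field_simp

theorem integral_mul_ratio_sub_ratio_eq (hFd : ∀ x, HasDerivAt F (f x) x)
    (hH : ∀ s, H s = f s * s - 2 * F s) (hHc : Continuous H) (hH0 : H 0 = 0) (ha : 0 < a)
    (s : ℝ) {t₀ : ℝ} (ht₀ : 0 < t₀) :
    ∫ t in t₀..1, a / 2 * t * |s| ^ (2 + 4 / a) *
        (H s / |s| ^ (2 + 4 / a) - H (t ^ (a / 2) * s) / |t ^ (a / 2) * s| ^ (2 + 4 / a)) =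
      (1 - t₀ ^ 2) / 2 * (a / 2) * H s + t₀ ^ (-a) * F (t₀ ^ (a / 2) * s) - F s := by
  have hlin : ∫ t in t₀..1, a / 2 * t * H s = a / 2 * H s * ((1 - t₀ ^ 2) / 2) := by
    simp_rw [mul_right_comm _ _ (H s)]
    rw [intervalIntegral.integral_const_mul, integral_id]
    ring
  rw [intervalIntegral.integral_congr fun t ht =>
      mul_ratio_sub_ratio_eq ha hH0 s (pos_of_mem_uIcc ht₀ one_pos ht),
    intervalIntegral.integral_sub
      ((by fun_prop : Continuous fun t : ℝ => a / 2 * t * H s).intervalIntegrable _ _)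
      (intervalIntegrable_rpow_neg_sub_one_mul_comp_rpow_mul hHc s ht₀), hlin,
    integral_rpow_neg_sub_one_mul_comp_rpow_mul hFd hH hHc s ht₀]
  ring

end Dilation

theorem apply_mul_le_of_monotoneOn_Ioi_of_antitoneOn_Iio {Q : ℝ → ℝ}
    (hmono : MonotoneOn Q (Ioi 0)) (hanti : AntitoneOn Q (Iio 0)) (s : ℝ) {c : ℝ}
    (hc₀ : 0 < c) (hc₁ : c ≤ 1) : Q (c * s) ≤ Q s := by
  rcases lt_trichotomy s 0 with hs | rfl | hs
  · exact hanti hs (mul_neg_of_pos_of_neg hc₀ hs) (by nlinarith)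
  · simp
  · exact hmono (mul_pos hc₀ hs) hs (by nlinarith)

theorem integral_nonneg_mul_sub_apply_rpow_mul {Q : ℝ → ℝ}
    (hmono : MonotoneOn Q (Ioi 0)) (hanti : AntitoneOn Q (Iio 0)) {a : ℝ} (ha : 0 < a)
    (s : ℝ) {t₀ : ℝ} (ht₀ : t₀ ∈ Ioc 0 1) :
    0 ≤ ∫ t in t₀..1, a / 2 * t * |s| ^ (2 + 4 / a) * (Q s - Q (t ^ (a / 2) * s)) := by
  refine intervalIntegral.integral_nonneg ht₀.2 fun t ht => ?_
  have ht0 : 0 < t := ht₀.1.trans_le ht.1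
  refine mul_nonneg (by positivity) (sub_nonneg.mpr ?_)
  exact apply_mul_le_of_monotoneOn_Ioi_of_antitoneOn_Iio hmono hanti s
    (rpow_pos_of_pos ht0 _) (rpow_le_one ht0.le ht.2 (by positivity))

theorem stmt9_general (N : ℕ) (hN : 3 ≤ N) (f : ℝ → ℝ) (hf : ContDiff ℝ 1 f)
    (F H : ℝ → ℝ)
    (hF : ∀ s : ℝ, F s = ∫ τ in (0 : ℝ)..s, f τ)
    (hH : ∀ s : ℝ, H s = f s * s - 2 * F s)
    (hmono : StrictMonoOn (fun s : ℝ => H s / |s| ^ ((2 : ℝ) + 4 / N)) (Ioi 0))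
    (hanti : StrictAntiOn (fun s : ℝ => H s / |s| ^ ((2 : ℝ) + 4 / N)) (Iio 0)) :
    ∀ s : ℝ, ∀ t₀ : ℝ, t₀ ∈ Ioc (0 : ℝ) 1 →
      0 ≤ ((1 - t₀ ^ 2) / 2) * ((N : ℝ) / 2) * H s +
          t₀ ^ (-(N : ℝ)) * F (t₀ ^ ((N : ℝ) / 2) * s) - F s ∧
      (0 ≤ ∫ t in t₀..1, ((N : ℝ) / 2) * t * |s| ^ ((2 : ℝ) + 4 / N) *
          (H s / |s| ^ ((2 : ℝ) + 4 / N) -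
            H (t ^ ((N : ℝ) / 2) * s) / |t ^ ((N : ℝ) / 2) * s| ^ ((2 : ℝ) + 4 / N))) ∧
      (∫ t in t₀..1, ((N : ℝ) / 2) * t * |s| ^ ((2 : ℝ) + 4 / N) *
          (H s / |s| ^ ((2 : ℝ) + 4 / N) -
            H (t ^ ((N : ℝ) / 2) * s) / |t ^ ((N : ℝ) / 2) * s| ^ ((2 : ℝ) + 4 / N))) =
        ((1 - t₀ ^ 2) / 2) * ((N : ℝ) / 2) * H s +
          t₀ ^ (-(N : ℝ)) * F (t₀ ^ ((N : ℝ) / 2) * s) - F s := by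
  have hNpos : (0 : ℝ) < N := by exact_mod_cast (by omega : 0 < N)
  have hFd : ∀ x, HasDerivAt F (f x) x := fun x =>
    funext hF ▸ (hf.continuous.integral_hasStrictDerivAt 0 x).hasDerivAt
  have hHc : Continuous H := by
    have hFc : Continuous F := continuous_iff_continuousAt.mpr fun x => (hFd x).continuousAt
    rw [funext hH]
    exact (hf.continuous.mul continuous_id).sub (continuous_const.mul hFc)
  have hH0 : H 0 = 0 := by simp [hH, hF]
  intro s t₀ ht₀
  have hnonneg := integral_nonneg_mul_sub_apply_rpow_mul hmono.monotoneOn hanti.antitoneOn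
    hNpos s ht₀
  have hid := integral_mul_ratio_sub_ratio_eq hFd hH hHc hH0 hNpos s ht₀.1
  exact ⟨hid ▸ hnonneg, hnonneg, hid⟩

theorem stmt9 (N : ℕ) (hN : 3 ≤ N) (f : ℝ → ℝ) (hf : ContDiff ℝ 1 f)
    (F H : ℝ → ℝ)
    (hF : ∀ s : ℝ, F s = ∫ τ in (0 : ℝ)..s, f τ)
    (hH : ∀ s : ℝ, H s = f s * s - 2 * F s)
    (hmono : StrictMonoOn (fun s : ℝ => H s / |s| ^ ((2 : ℝ) + 4 / N)) (Ioi 0))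
    (hanti : StrictAntiOn (fun s : ℝ => H s / |s| ^ ((2 : ℝ) + 4 / N)) (Iio 0))
    (hlim : Tendsto (fun s : ℝ => H s / |s| ^ ((2 : ℝ) + 4 / N)) (nhdsWithin 0 {0}ᶜ)
      (nhds 0)) :
    ∀ s : ℝ, ∀ t₀ : ℝ, t₀ ∈ Ioc (0 : ℝ) 1 →
      0 ≤ ((1 - t₀ ^ 2) / 2) * ((N : ℝ) / 2) * H s +
          t₀ ^ (-(N : ℝ)) * F (t₀ ^ ((N : ℝ) / 2) * s) - F s ∧
      (0 ≤ ∫ t in t₀..1, ((N : ℝ) / 2) * t * |s| ^ ((2 : ℝ) + 4 / N) *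
          (H s / |s| ^ ((2 : ℝ) + 4 / N) -
            H (t ^ ((N : ℝ) / 2) * s) / |t ^ ((N : ℝ) / 2) * s| ^ ((2 : ℝ) + 4 / N))) ∧
      (∫ t in t₀..1, ((N : ℝ) / 2) * t * |s| ^ ((2 : ℝ) + 4 / N) *
          (H s / |s| ^ ((2 : ℝ) + 4 / N) -
            H (t ^ ((N : ℝ) / 2) * s) / |t ^ ((N : ℝ) / 2) * s| ^ ((2 : ℝ) + 4 / N))) =
        ((1 - t₀ ^ 2) / 2) * ((N : ℝ) / 2) * H s +
          t₀ ^ (-(N : ℝ)) * F (t₀ ^ ((N : ℝ) / 2) * s) - F s :=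
  stmt9_general N hN f hf F H hF hH hmono hanti
end

section
/- Let N ≥ 3 and 2 < q < 2*. Suppose a sequence uₙ ∈ H¹(ℝᴺ) satisfies ‖uₙ‖₂² = cₙ with cₙ bounded, and Aₙ := ‖∇uₙ‖₂² bounded with inf Aₙ > 0. Suppose moreover ∫|uₙ|^{q} → 0 and that F satisfies F(s) ≤ C_ε|s|^{q} + (η+ε)|s|^{2*} and H(s) := f(s)s − 2F(s) ≤ (2* − 2)F(s) pointwise. If P(uₙ) = Aₙ − (N/2)∫H(uₙ) = 0 for all n, then lim inf Aₙ ≥ (2*(η+ε))^{(2−N)/2} S^{N/2}. -/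
open Real Set Filter MeasureTheory

/-!
Feeding the growth bound on `F`, the bound `H ≤ (2* - 2) F` and the Sobolev inequality into the
Pohozaev identity `A = (N/2) ∫ H(u)` gives `A ≤ δ + c A^{2*/2}` with `δ = 2* C_ε ∫ |u|^q → 0` and
`c = 2*(η+ε) S^{-2*/2}`. If `A ≥ a > 0` stays below a level `b` with `c b^{2*/2 - 1} = θ < 1`, this
forces `(1 - θ) a ≤ δ`, which fails eventually; the threshold level is `c^{-1/(2*/2 - 1)}`.
-/

theorem eventually_le_of_le_add_mul_rpow {A δ : ℕ → ℝ} {a b c r : ℝ} (ha : 0 < a)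
    (hAa : ∀ n, a ≤ A n) (hδ : Tendsto δ atTop (nhds 0)) (hc : 0 < c) (hr : 1 ≤ r)
    (hA : ∀ n, A n ≤ δ n + c * A n ^ r) (hb : c * b ^ (r - 1) < 1) :
    ∀ᶠ n in atTop, b ≤ A n := by
  have hgap : 0 < (1 - c * b ^ (r - 1)) * a := mul_pos (by linarith) ha
  filter_upwards [hδ.eventually (gt_mem_nhds hgap)] with n hn
  by_contra! hlt
  have hAn : 0 < A n := ha.trans_le (hAa n)
  have hpow : A n ^ r = A n ^ (r - 1) * A n := by
    rw [rpow_sub_one hAn.ne', div_mul_cancel₀ _ hAn.ne']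
  have hmono : A n ^ (r - 1) ≤ b ^ (r - 1) := rpow_le_rpow hAn.le hlt.le (by linarith)
  have h1 : 0 ≤ c * (b ^ (r - 1) - A n ^ (r - 1)) * A n :=
    mul_nonneg (mul_nonneg hc.le (by linarith)) hAn.le
  have h2 : 0 ≤ (1 - c * b ^ (r - 1)) * (A n - a) := mul_nonneg (by linarith) (by linarith [hAa n])
  nlinarith [hA n]

theorem le_liminf_of_le_add_mul_rpow {A δ : ℕ → ℝ} {a c r : ℝ} (ha : 0 < a)
    (hAa : ∀ n, a ≤ A n) (hAcob : IsCoboundedUnder (· ≥ ·) atTop A)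
    (hδ : Tendsto δ atTop (nhds 0)) (hc : 0 < c) (hr : 1 < r)
    (hA : ∀ n, A n ≤ δ n + c * A n ^ r) :
    c ^ (1 - r)⁻¹ ≤ liminf A atTop := by
  refine le_of_forall_lt_imp_le_of_dense fun b hb => le_liminf_of_le hAcob ?_
  rcases le_or_gt b 0 with hb0 | hb0
  · exact Eventually.of_forall fun n => hb0.trans (ha.le.trans (hAa n))
  refine eventually_le_of_le_add_mul_rpow ha hAa hδ hc hr.le hA ?_
  have hthreshold : (c ^ (1 - r)⁻¹) ^ (r - 1) = c⁻¹ := by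
    have hr1 : 1 - r ≠ 0 := by linarith
    rw [← rpow_mul hc.le, show (1 - r)⁻¹ * (r - 1) = -1 by field_simp; ring, rpow_neg_one]
  calc c * b ^ (r - 1) < c * (c ^ (1 - r)⁻¹) ^ (r - 1) :=
        mul_lt_mul_of_pos_left (rpow_lt_rpow hb0.le hb (by linarith)) hc
    _ = 1 := by rw [hthreshold, mul_inv_cancel₀ hc.ne']

theorem integral_comp_le_of_le_growth {X : Type*} [MeasurableSpace X] {μ : Measure X}
    {u : X → ℝ} {F : ℝ → ℝ} {C d q p : ℝ} (hF : ∀ s, F s ≤ C * |s| ^ q + d * |s| ^ p)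
    (hFi : Integrable (fun x => F (u x)) μ) (hqi : Integrable (fun x => |u x| ^ q) μ)
    (hpi : Integrable (fun x => |u x| ^ p) μ) :
    ∫ x, F (u x) ∂μ ≤ C * ∫ x, |u x| ^ q ∂μ + d * ∫ x, |u x| ^ p ∂μ := by
  rw [← integral_const_mul, ← integral_const_mul,
    ← integral_add (hqi.const_mul C) (hpi.const_mul d)]
  exact integral_mono hFi ((hqi.const_mul C).add (hpi.const_mul d)) fun x => hF (u x)

theorem le_add_mul_rpow_of_pohozaev {X : Type*} [MeasurableSpace X] {μ : Measure X}
    {u : X → ℝ} {F H : ℝ → ℝ} {N q C d S A : ℝ} (hN : 2 < N) (hd : 0 ≤ d) (hS : 0 < S)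
    (hF : ∀ s, F s ≤ C * |s| ^ q + d * |s| ^ (2 * N / (N - 2)))
    (hHF : ∀ s, H s ≤ (2 * N / (N - 2) - 2) * F s)
    (hFi : Integrable (fun x => F (u x)) μ) (hHi : Integrable (fun x => H (u x)) μ)
    (hqi : Integrable (fun x => |u x| ^ q) μ)
    (hpi : Integrable (fun x => |u x| ^ (2 * N / (N - 2))) μ)
    (hSob : S * (∫ x, |u x| ^ (2 * N / (N - 2)) ∂μ) ^ ((N - 2) / N) ≤ A)
    (hP : A - N / 2 * ∫ x, H (u x) ∂μ = 0) :
    A ≤ 2 * N / (N - 2) * C * ∫ x, |u x| ^ q ∂μ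
      + 2 * N / (N - 2) * d / S ^ (N / (N - 2)) * A ^ (N / (N - 2)) := by
  set p := 2 * N / (N - 2)
  have hN2 : 0 < N - 2 := by linarith
  have hp : 0 ≤ p := by positivity
  have hpN : N / 2 * (p - 2) = p := by simp only [p]; field_simp; ring
  have hI0 : 0 ≤ ∫ x, |u x| ^ p ∂μ := integral_nonneg fun x => rpow_nonneg (abs_nonneg _) _
  have hA0 : 0 ≤ A := (mul_nonneg hS.le (rpow_nonneg hI0 _)).trans hSob
  have hI : ∫ x, |u x| ^ p ∂μ ≤ (A / S) ^ (N / (N - 2)) := by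
    rw [← inv_div (N - 2) N, le_rpow_inv_iff_of_pos hI0 (div_nonneg hA0 hS.le) (by positivity),
      le_div_iff₀' hS]
    exact hSob
  calc A = N / 2 * ∫ x, H (u x) ∂μ := by linarith
    _ ≤ N / 2 * ((p - 2) * ∫ x, F (u x) ∂μ) := by
        gcongr
        rw [← integral_const_mul]
        exact integral_mono hHi (hFi.const_mul _) fun x => hHF (u x)
    _ = p * ∫ x, F (u x) ∂μ := by rw [← mul_assoc, hpN]
    _ ≤ p * (C * ∫ x, |u x| ^ q ∂μ + d * (A / S) ^ (N / (N - 2))) := by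
        gcongr
        exact (integral_comp_le_of_le_growth hF hFi hqi hpi).trans (by gcongr)
    _ = _ := by rw [div_rpow hA0 hS.le]; ring

theorem rpow_inv_one_sub_critical {N e S : ℝ} (hN : 2 < N) (he : 0 < e) (hS : 0 < S) :
    (e / S ^ (N / (N - 2))) ^ (1 - N / (N - 2))⁻¹ = e ^ ((2 - N) / 2) * S ^ (N / 2) := by
  have hN2 : N - 2 ≠ 0 := by linarith
  have hexp : (1 - N / (N - 2))⁻¹ = (2 - N) / 2 := by
    rw [one_sub_div hN2, inv_div]; ring
  rw [hexp, div_rpow he.le (rpow_nonneg hS.le _), ← rpow_mul hS.le, div_eq_mul_inv,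
    ← rpow_neg hS.le, show -(N / (N - 2) * ((2 - N) / 2)) = N / 2 by field_simp; ring]

theorem stmt12_general (N : ℕ) (hN : 3 ≤ N) (q η ε S : ℝ)
    (hη : 0 < η) (hε : 0 < ε) (hS : 0 < S)
    (F H : ℝ → ℝ)
    (Cε : ℝ)
    (hFgrowth : ∀ s : ℝ, F s ≤ Cε * |s| ^ q + (η + ε) * |s| ^ ((2 * N : ℝ) / (N - 2 : ℝ)))
    (hHF : ∀ s : ℝ, H s ≤ ((2 * N : ℝ) / (N - 2 : ℝ) - 2) * F s)
    (u : ℕ → EuclideanSpace ℝ (Fin N) → ℝ)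
    (A : ℕ → ℝ)
    (MA : ℝ) (hAbdd : ∀ n, A n ≤ MA) (a : ℝ) (ha : 0 < a) (hAlb : ∀ n, a ≤ A n)
    (hqint : ∀ n, Integrable (fun x => |u n x| ^ q)
      (volume : Measure (EuclideanSpace ℝ (Fin N))))
    (hcritint : ∀ n, Integrable (fun x => |u n x| ^ ((2 * N : ℝ) / (N - 2 : ℝ)))
      (volume : Measure (EuclideanSpace ℝ (Fin N))))
    (hHint : ∀ n, Integrable (fun x => H (u n x))
      (volume : Measure (EuclideanSpace ℝ (Fin N))))
    (hFint : ∀ n, Integrable (fun x => F (u n x))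
      (volume : Measure (EuclideanSpace ℝ (Fin N))))
    (hqvanish : Tendsto (fun n =>
      ∫ x, |u n x| ^ q ∂(volume : Measure (EuclideanSpace ℝ (Fin N)))) atTop (nhds 0))
    (hSob : ∀ n, S * (∫ x, |u n x| ^ ((2 * N : ℝ) / (N - 2 : ℝ))
        ∂(volume : Measure (EuclideanSpace ℝ (Fin N)))) ^ ((N - 2 : ℝ) / N) ≤ A n)
    (hP : ∀ n, A n - ((N : ℝ) / 2) *
      (∫ x, H (u n x) ∂(volume : Measure (EuclideanSpace ℝ (Fin N)))) = 0) :
    ((2 * N : ℝ) / (N - 2 : ℝ) * (η + ε)) ^ ((2 - N : ℝ) / 2) * S ^ ((N : ℝ) / 2) ≤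
      Filter.atTop.liminf A := by
  have hN2 : (2 : ℝ) < N := by exact_mod_cast hN
  have hr : 1 < (N : ℝ) / (N - 2) := by rw [one_lt_div (by linarith)]; linarith
  have hηε : 0 < η + ε := by linarith
  have hδ : Tendsto (fun n => 2 * N / (N - 2) * Cε * ∫ x, |u n x| ^ q) atTop (nhds 0) := by
    simpa using hqvanish.const_mul (2 * N / (N - 2) * Cε)
  have hAcob : IsCoboundedUnder (· ≥ ·) atTop A :=
    (isBoundedUnder_of ⟨MA, hAbdd⟩).isCoboundedUnder_ge
  have hlim := le_liminf_of_le_add_mul_rpow ha hAlb hAcob hδ (by positivity) hr fun n =>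
    le_add_mul_rpow_of_pohozaev hN2 hηε.le hS hFgrowth hHF (hFint n) (hHint n) (hqint n)
      (hcritint n) (hSob n) (hP n)
  rwa [rpow_inv_one_sub_critical hN2 (by positivity) hS] at hlim

theorem stmt12 (N : ℕ) (hN : 3 ≤ N) (q η ε S : ℝ)
    (hq : q ∈ Ioo (2 : ℝ) ((2 * N : ℝ) / (N - 2 : ℝ)))
    (hη : 0 < η) (hε : 0 < ε) (hS : 0 < S)
    (f F H : ℝ → ℝ) (hH : ∀ s : ℝ, H s = f s * s - 2 * F s)
    (Cε : ℝ) (hCε : 0 < Cε)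
    (hFgrowth : ∀ s : ℝ, F s ≤ Cε * |s| ^ q + (η + ε) * |s| ^ ((2 * N : ℝ) / (N - 2 : ℝ)))
    (hHF : ∀ s : ℝ, H s ≤ ((2 * N : ℝ) / (N - 2 : ℝ) - 2) * F s)
    (u : ℕ → EuclideanSpace ℝ (Fin N) → ℝ) (hu1 : ∀ n, Differentiable ℝ (u n))
    (A : ℕ → ℝ)
    (hA : ∀ n, A n = ∫ x, ‖fderiv ℝ (u n) x‖ ^ 2 ∂(volume : Measure (EuclideanSpace ℝ (Fin N))))
    (Mc : ℝ) (hmassbdd : ∀ n,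
      (∫ x, (u n x) ^ 2 ∂(volume : Measure (EuclideanSpace ℝ (Fin N)))) ≤ Mc)
    (MA : ℝ) (hAbdd : ∀ n, A n ≤ MA) (a : ℝ) (ha : 0 < a) (hAlb : ∀ n, a ≤ A n)
    (hqint : ∀ n, Integrable (fun x => |u n x| ^ q)
      (volume : Measure (EuclideanSpace ℝ (Fin N))))
    (hcritint : ∀ n, Integrable (fun x => |u n x| ^ ((2 * N : ℝ) / (N - 2 : ℝ)))
      (volume : Measure (EuclideanSpace ℝ (Fin N))))
    (hHint : ∀ n, Integrable (fun x => H (u n x))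
      (volume : Measure (EuclideanSpace ℝ (Fin N))))
    (hFint : ∀ n, Integrable (fun x => F (u n x))
      (volume : Measure (EuclideanSpace ℝ (Fin N))))
    (hqvanish : Tendsto (fun n =>
      ∫ x, |u n x| ^ q ∂(volume : Measure (EuclideanSpace ℝ (Fin N)))) atTop (nhds 0))
    (hSob : ∀ n, S * (∫ x, |u n x| ^ ((2 * N : ℝ) / (N - 2 : ℝ))
        ∂(volume : Measure (EuclideanSpace ℝ (Fin N)))) ^ ((N - 2 : ℝ) / N) ≤ A n)
    (hP : ∀ n, A n - ((N : ℝ) / 2) *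
      (∫ x, H (u n x) ∂(volume : Measure (EuclideanSpace ℝ (Fin N)))) = 0) :
    ((2 * N : ℝ) / (N - 2 : ℝ) * (η + ε)) ^ ((2 - N : ℝ) / 2) * S ^ ((N : ℝ) / 2) ≤
      Filter.atTop.liminf A :=
  stmt12_general N hN q η ε S hη hε hS F H Cε hFgrowth hHF u A MA hAbdd a ha hAlb hqint hcritint
    hHint hFint hqvanish hSob hP
end
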